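/- Let X be a Banach space, Y an M-summand in X, and Z a closed subspace of Y. If the triplet (Y, Z, CB(Y)) has property-(P₁), then (X, Z, CB(X)) has property-(P₁). -/

import Mathlib

open Metric Set Bornology Pointwise

/-- The farthest distance `r(v,B) = sup_{b ∈ B} ‖v - b‖`. -/
noncomputable def farr {X : Type*} [NormedAddCommGroup X] (v : X) (B : Set X) : ℝ :=
  ⨆ b : B, ‖v - (b : X)‖

/-- The restricted Chebyshev radius `rad_V(B) = inf_{v ∈ V} r(v,B)`. -/
noncomputable def rad {X : Type*} [NormedAddCommGroup X] (V B : Set X) : ℝ :=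
  ⨅ v : V, farr (v : X) B

/-- The set of restricted Chebyshev centers of `B` in `V`. -/
noncomputable def cheb {X : Type*} [NormedAddCommGroup X] (V B : Set X) : Set X :=
  {v ∈ V | farr v B = rad V B}
/-- Property-(P₁) for the triplet `(amb, V, CB(amb))`: for every nonempty closed bounded
subset of the ambient set `amb`, restricted Chebyshev centers in `V` exist and
near-centers are close to centers. -/
noncomputable def propP1Rel {X : Type*} [NormedAddCommGroup X] (amb V : Set X) : Prop :=
  ∀ B : Set X, B ⊆ amb → B.Nonempty → IsClosed B → IsBounded B →
    (cheb V B).Nonempty ∧ ∀ ε > (0 : ℝ), ∃ δ > (0 : ℝ),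
      {v ∈ V | farr v B ≤ rad V B + δ} ⊆ cheb V B + closedBall 0 ε

/-! For `v ∈ Y` the M-decomposition `‖x‖ = max ‖P x‖ ‖x - P x‖` applied to `v - b` gives
`r(v, B) = max (r(v, B')) s`, where `B'` is the closure of `P B` (a closed bounded subset
of `Y`) and `s = sup_{b ∈ B} ‖b - P b‖` does not depend on `v`. Hence
`rad_Z(B) = max (rad_Z(B')) s` and the centers of `B'` are centers of `B`. If `s ≤ rad_Z(B')`,
near-centers of `B` are near-centers of `B'`. Otherwise a near-center `v` of `B` is moved along
the segment towards a center of `B'` until `r(·, B')` drops to `s`; by convexity of `r(·, B')`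
this costs a distance proportional to the defect `δ`. -/

section RestrictedCenters

variable {X : Type*} [NormedAddCommGroup X]

section farr

variable {v w : X} {B : Set X}

lemma bddAbove_range_norm_sub (hB : IsBounded B) (v : X) :
    BddAbove (range fun b : B => ‖v - (b : X)‖) := by
  obtain ⟨C, hC⟩ := isBounded_iff_forall_norm_le.mp hB
  refine ⟨‖v‖ + C, ?_⟩
  rintro _ ⟨b, rfl⟩
  exact (norm_sub_le _ _).trans (by linarith [hC b b.2])

lemma norm_sub_le_farr (hB : IsBounded B) {b : X} (hb : b ∈ B) : ‖v - b‖ ≤ farr v B :=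
  le_ciSup (bddAbove_range_norm_sub hB v) ⟨b, hb⟩

lemma farr_le (hB : B.Nonempty) {c : ℝ} (hc : ∀ b ∈ B, ‖v - b‖ ≤ c) : farr v B ≤ c :=
  have : Nonempty B := hB.to_subtype
  ciSup_le fun b => hc b b.2

lemma farr_nonneg : 0 ≤ farr v B :=
  Real.iSup_nonneg fun _ => norm_nonneg _

lemma rad_nonneg {V : Set X} : 0 ≤ rad V B :=
  Real.iInf_nonneg fun _ => farr_nonneg

lemma farr_image {Y : Type*} (f : Y → X) (A : Set Y) :
    farr v (f '' A) = ⨆ a : A, ‖v - f a‖ := by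
  simp only [farr, iSup]
  congr 1
  ext
  simp

lemma farr_closure (hne : B.Nonempty) (hB : IsBounded B) :
    farr v (closure B) = farr v B := by
  refine le_antisymm (farr_le hne.closure fun b hb => ?_)
    (farr_le hne fun b hb => norm_sub_le_farr hB.closure (subset_closure hb))
  have hcl : IsClosed {x : X | ‖v - x‖ ≤ farr v B} :=
    isClosed_le (continuous_const.sub continuous_id).norm continuous_const
  exact hcl.closure_subset_iff.mpr (fun b hb => norm_sub_le_farr hB hb) hb

lemma norm_sub_le_farr_add_farr (hne : B.Nonempty) (hB : IsBounded B) :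
    ‖v - w‖ ≤ farr v B + farr w B := by
  obtain ⟨b, hb⟩ := hne
  calc ‖v - w‖ ≤ ‖v - b‖ + ‖w - b‖ := by
        simpa only [norm_sub_rev b w] using norm_sub_le_norm_sub_add_norm_sub v b w
    _ ≤ farr v B + farr w B := add_le_add (norm_sub_le_farr hB hb) (norm_sub_le_farr hB hb)

lemma farr_add_smul_sub_le [NormedSpace ℝ X] (hne : B.Nonempty) (hB : IsBounded B) {t : ℝ}
    (ht₀ : 0 ≤ t) (ht₁ : t ≤ 1) :
    farr (v + t • (w - v)) B ≤ (1 - t) * farr v B + t * farr w B := by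
  refine farr_le hne fun b hb => ?_
  have h1t : 0 ≤ 1 - t := sub_nonneg.mpr ht₁
  calc ‖v + t • (w - v) - b‖ = ‖(1 - t) • (v - b) + t • (w - b)‖ := by congr 1; module
    _ ≤ (1 - t) * ‖v - b‖ + t * ‖w - b‖ := by
      refine (norm_add_le _ _).trans_eq ?_
      rw [norm_smul, norm_smul, Real.norm_of_nonneg h1t, Real.norm_of_nonneg ht₀]
    _ ≤ (1 - t) * farr v B + t * farr w B := by
      gcongr <;> exact norm_sub_le_farr hB hb

end farr

lemma farr_eq_max_of_norm_eq_max {F : Type*} [FunLike F X X] [AddMonoidHomClass F X X] {P : F}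
    (hP : ∀ x, ‖x‖ = max ‖P x‖ ‖x - P x‖) {B : Set X} (hB : IsBounded B) {v : X}
    (hv : P v = v) :
    farr v B = max (farr v (P '' B)) (⨆ b : B, ‖(b : X) - P b‖) := by
  have hsplit : ∀ b, ‖v - b‖ = max ‖v - P b‖ ‖b - P b‖ := fun b => by
    simpa only [map_sub, hv, sub_sub_sub_cancel_left, norm_sub_rev (P b)] using hP (v - b)
  have hbdd := bddAbove_range_norm_sub hB v
  rw [farr_image, ← ciSup_sup_eq
    (hbdd.range_mono _ fun b => (hsplit b).symm ▸ le_max_left _ _)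
    (hbdd.range_mono _ fun b => (hsplit b).symm ▸ le_max_right _ _)]
  exact iSup_congr fun b => hsplit b

def HasPropertyP1 (V B : Set X) : Prop :=
  (cheb V B).Nonempty ∧ ∀ ε > (0 : ℝ), ∃ δ > (0 : ℝ),
    {v ∈ V | farr v B ≤ rad V B + δ} ⊆ cheb V B + closedBall 0 ε

section MaxShift

variable {V B B' : Set X} {s : ℝ}

lemma rad_eq_max_of_farr_eq_max (h : ∀ v ∈ V, farr v B = max (farr v B') s) (hV : V.Nonempty) :
    rad V B = max (rad V B') s := by
  have : Nonempty V := hV.to_subtype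
  calc rad V B = ⨅ v : V, max (farr (v : X) B') s := iInf_congr fun v => h v v.2
    _ = max (rad V B') s :=
      (Monotone.map_ciInf_of_continuousAt (f := fun x => max x s)
        (continuous_id.max continuous_const).continuousAt (fun _ _ hab => max_le_max hab le_rfl)
        ⟨0, by rintro _ ⟨v, rfl⟩; exact farr_nonneg⟩).symm

lemma cheb_subset_of_farr_eq_max (h : ∀ v ∈ V, farr v B = max (farr v B') s) :
    cheb V B' ⊆ cheb V B := by
  rintro v ⟨hv, hvc⟩
  exact ⟨hv, by rw [h v hv, hvc, rad_eq_max_of_farr_eq_max h ⟨v, hv⟩]⟩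

lemma exists_delta_of_rad_lt [NormedSpace ℝ X] (h : ∀ v ∈ V, farr v B = max (farr v B') s)
    (hV : Convex ℝ V) (hB'ne : B'.Nonempty) (hB' : IsBounded B') {v₀ : X}
    (hv₀ : v₀ ∈ cheb V B') (hrs : rad V B' < s) {ε : ℝ} (hε : 0 < ε) :
    ∃ δ > (0 : ℝ), {v ∈ V | farr v B ≤ rad V B + δ} ⊆ cheb V B + closedBall 0 ε := by
  set r := rad V B'
  have hr : 0 ≤ r := rad_nonneg
  have hradB : rad V B = s := by
    rw [rad_eq_max_of_farr_eq_max h ⟨v₀, hv₀.1⟩, max_eq_right hrs.le]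
  -- `δ ≤ ε` and `δ (s + r) = ε (s - r)` yield the final `δ (s + δ + r) ≤ ε (s + δ - r)`
  set δ := ε * (s - r) / (s + r)
  have hδ : 0 < δ := div_pos (mul_pos hε (by linarith)) (by linarith)
  have hδε : δ * (s + r) = ε * (s - r) := div_mul_cancel₀ _ (by linarith)
  have hδε' : δ ≤ ε := le_of_mul_le_mul_right (by nlinarith) (by linarith : 0 < s + r)
  refine ⟨δ, hδ, ?_⟩
  rintro v ⟨hv, hvB⟩
  have hvB' : farr v B' ≤ s + δ := by
    rw [h v hv, hradB] at hvB
    exact (le_max_left _ _).trans hvB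
  -- move `v` towards the center `v₀` just enough to bring `farr · B'` down to `s`
  set t := δ / (s + δ - r)
  have ht : t * (s + δ - r) = δ := div_mul_cancel₀ _ (by linarith)
  have ht₀ : 0 ≤ t := div_nonneg hδ.le (by linarith)
  have ht₁ : t ≤ 1 := (div_le_one (by linarith)).mpr (by linarith)
  set w := v + t • (v₀ - v)
  have hwV : w ∈ V := hV.add_smul_sub_mem hv hv₀.1 ⟨ht₀, ht₁⟩
  have hwB' : farr w B' ≤ s := by
    calc farr w B' ≤ (1 - t) * farr v B' + t * farr v₀ B' :=
          farr_add_smul_sub_le hB'ne hB' ht₀ ht₁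
      _ ≤ (1 - t) * (s + δ) + t * r := by
          gcongr
          exact hv₀.2.le
      _ = s := by linear_combination -ht
  have hwB : w ∈ cheb V B := ⟨hwV, by rw [h w hwV, hradB, max_eq_right hwB']⟩
  have hvw : ‖v - w‖ ≤ ε := by
    calc ‖v - w‖ = t * ‖v - v₀‖ := by
          rw [show v - w = t • (v - v₀) by module, norm_smul, Real.norm_of_nonneg ht₀]
      _ ≤ t * (s + δ + r) := by
          gcongr
          exact (norm_sub_le_farr_add_farr hB'ne hB').trans (add_le_add hvB' hv₀.2.le)
      _ ≤ ε := by
          rw [div_mul_eq_mul_div, div_le_iff₀ (by linarith)]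
          nlinarith [mul_le_mul_of_nonneg_left hδε' hδ.le]
  exact ⟨w, hwB, v - w, mem_closedBall_zero_iff.mpr hvw, add_sub_cancel w v⟩

lemma HasPropertyP1.of_farr_eq_max [NormedSpace ℝ X]
    (h : ∀ v ∈ V, farr v B = max (farr v B') s) (hV : Convex ℝ V) (hB'ne : B'.Nonempty)
    (hB' : IsBounded B') (hP1 : HasPropertyP1 V B') : HasPropertyP1 V B := by
  obtain ⟨⟨v₀, hv₀⟩, hnear⟩ := hP1
  refine ⟨⟨v₀, cheb_subset_of_farr_eq_max h hv₀⟩, fun ε hε => ?_⟩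
  rcases le_or_gt s (rad V B') with hsr | hrs
  · obtain ⟨δ, hδ, hsub⟩ := hnear ε hε
    refine ⟨δ, hδ, fun v ⟨hv, hvB⟩ =>
      add_subset_add_right (cheb_subset_of_farr_eq_max h) ?_⟩
    rw [h v hv, rad_eq_max_of_farr_eq_max h ⟨v₀, hv₀.1⟩, max_eq_left hsr] at hvB
    exact hsub ⟨hv, (le_max_left _ _).trans hvB⟩
  · exact exists_delta_of_rad_lt h hV hB'ne hB' hv₀ hrs hε

end MaxShift

end RestrictedCenters

theorem stmt14_general {X : Type*} [NormedAddCommGroup X] [NormedSpace ℝ X]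
    (Y Z : Subspace ℝ X) (hYc : IsClosed (Y : Set X))
    (hZY : Z ≤ Y)
    (P : X →L[ℝ] X)
    (hrange : ∀ x, P x ∈ Y) (hfix : ∀ y ∈ Y, P y = y)
    (hnorm : ∀ x, ‖x‖ = max ‖P x‖ ‖x - P x‖)
    (h : propP1Rel (Y : Set X) (Z : Set X)) :
    propP1Rel (univ : Set X) (Z : Set X) := by
  intro B _ hne _ hB
  have hPB : IsBounded (P '' B) := P.lipschitz.isBounded_image hB
  have hPBY : closure (P '' B) ⊆ Y :=
    hYc.closure_subset_iff.mpr (image_subset_iff.mpr fun x _ => hrange x)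
  refine HasPropertyP1.of_farr_eq_max (s := ⨆ b : B, ‖(b : X) - P b‖) (fun v hv => ?_)
    Z.convex (hne.image P).closure hPB.closure
    (h _ hPBY (hne.image P).closure isClosed_closure hPB.closure)
  rw [farr_closure (hne.image P) hPB]
  exact farr_eq_max_of_norm_eq_max hnorm hB (hfix v (hZY hv))

theorem stmt14 {X : Type*} [NormedAddCommGroup X] [NormedSpace ℝ X] [CompleteSpace X]
    (Y Z : Subspace ℝ X) (hYc : IsClosed (Y : Set X)) (hZc : IsClosed (Z : Set X))
    (hZY : Z ≤ Y)
    (P : X →L[ℝ] X) (hproj : ∀ x, P (P x) = P x)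
    (hrange : ∀ x, P x ∈ Y) (hfix : ∀ y ∈ Y, P y = y)
    (hnorm : ∀ x, ‖x‖ = max ‖P x‖ ‖x - P x‖)
    (h : propP1Rel (Y : Set X) (Z : Set X)) :
    propP1Rel (univ : Set X) (Z : Set X) :=
  stmt14_general Y Z hYc hZY P hrange hfix hnorm h
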